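/- The element φ_s can be rewritten in terms of the generators of the symmetry subgroup: as linear maps on Pic, φ_s = w_2 r_1 w_2 w_1 w_2 r_1 w_2 r_2 r_3 r_1 r_2 w_0 w_6, where φ_s = w_2 w_3 w_8 w_4 w_3 w_2 w_1 w_2 w_3 w_4 w_5 w_6 w_7 w_0 w_8 w_3 w_4 w_5 w_6 w_7 w_0 w_2 w_3 w_4 w_5 w_6 w_8 w_3 w_4 w_5 w_6. -/
import Mathlib


open Finset Function

/-- The Picard lattice `ℤ^10` with basis `H_0, H_1, E_1, …, E_8`
(coordinates `0, 1, 2, …, 9`). -/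
abbrev Pic : Type := Fin 10 → ℤ

/-- The intersection form: `(H_0|H_1) = 1`, `(H_0|H_0) = (H_1|H_1) = 0`,
`(H_0|E_i) = (H_1|E_i) = 0`, `(E_i|E_j) = -δ_{ij}`. -/
def form (v w : Pic) : ℤ :=
  v 0 * w 1 + v 1 * w 0
    - v 2 * w 2 - v 3 * w 3 - v 4 * w 4 - v 5 * w 5
    - v 6 * w 6 - v 7 * w 7 - v 8 * w 8 - v 9 * w 9

/-- The anticanonical class `δ = 2H_0 + 2H_1 - (E_1 + ⋯ + E_8)`. -/
def delta : Pic := ![2, 2, -1, -1, -1, -1, -1, -1, -1, -1]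

/-- The simple roots `β_0, …, β_8`:
`β_0 = E_7 - E_8`, `β_1 = H_1 - H_0`, `β_2 = H_0 - E_1 - E_2`,
`β_3 = E_2 - E_3`, `β_4 = E_3 - E_4`, `β_5 = E_4 - E_5`,
`β_6 = E_5 - E_6`, `β_7 = E_6 - E_7`, `β_8 = E_1 - E_2`. -/
def β : Fin 9 → Pic :=
  ![![0, 0, 0, 0, 0, 0, 0, 0, 1, -1],
    ![-1, 1, 0, 0, 0, 0, 0, 0, 0, 0],
    ![1, 0, -1, -1, 0, 0, 0, 0, 0, 0],
    ![0, 0, 0, 1, -1, 0, 0, 0, 0, 0],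
    ![0, 0, 0, 0, 1, -1, 0, 0, 0, 0],
    ![0, 0, 0, 0, 0, 1, -1, 0, 0, 0],
    ![0, 0, 0, 0, 0, 0, 1, -1, 0, 0],
    ![0, 0, 0, 0, 0, 0, 0, 1, -1, 0],
    ![0, 0, 1, -1, 0, 0, 0, 0, 0, 0]]

/-- The reflection `w_i(v) = v + (v|β_i)·β_i`. -/
def w (i : Fin 9) : Pic → Pic := fun v => v + form v (β i) • β i

/-- `r_1 = w_3 w_4 w_8 w_3`. -/
def r1 : Pic → Pic := w 3 ∘ w 4 ∘ w 8 ∘ w 3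

/-- `r_2 = w_5 w_4 w_6 w_5`. -/
def r2 : Pic → Pic := w 5 ∘ w 4 ∘ w 6 ∘ w 5

/-- `r_3 = w_7 w_6 w_0 w_7`. -/
def r3 : Pic → Pic := w 7 ∘ w 6 ∘ w 0 ∘ w 7

/-- `φ_s = w_2 w_3 w_8 w_4 w_3 w_2 w_1 w_2 w_3 w_4 w_5 w_6 w_7 w_0 w_8 w_3 w_4
w_5 w_6 w_7 w_0 w_2 w_3 w_4 w_5 w_6 w_8 w_3 w_4 w_5 w_6`. -/
def phis : Pic → Pic :=
  w 2 ∘ w 3 ∘ w 8 ∘ w 4 ∘ w 3 ∘ w 2 ∘ w 1 ∘ w 2 ∘ w 3 ∘ w 4 ∘ w 5 ∘ w 6 ∘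
    w 7 ∘ w 0 ∘ w 8 ∘ w 3 ∘ w 4 ∘ w 5 ∘ w 6 ∘ w 7 ∘ w 0 ∘ w 2 ∘ w 3 ∘ w 4 ∘
    w 5 ∘ w 6 ∘ w 8 ∘ w 3 ∘ w 4 ∘ w 5 ∘ w 6


lemma w_lin (i : Fin 9) : IsLinearMap ℤ (w i) := by
  constructor
  · intro x y
    funext k
    simp only [w, form, Pi.add_apply, Pi.smul_apply, smul_eq_mul]
    ring
  · intro c x
    funext k
    simp only [w, form, Pi.add_apply, Pi.smul_apply, smul_eq_mul]
    ring

lemma comp_lin {f g : Pic → Pic} (hf : IsLinearMap ℤ f) (hg : IsLinearMap ℤ g) :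
    IsLinearMap ℤ (f ∘ g) :=
  ⟨fun x y => by simp only [Function.comp_apply, hg.map_add, hf.map_add],
   fun c x => by simp only [Function.comp_apply, hg.map_smul, hf.map_smul]⟩

lemma r1_lin : IsLinearMap ℤ r1 :=
  comp_lin (w_lin 3) (comp_lin (w_lin 4) (comp_lin (w_lin 8) (w_lin 3)))

lemma r2_lin : IsLinearMap ℤ r2 :=
  comp_lin (w_lin 5) (comp_lin (w_lin 4) (comp_lin (w_lin 6) (w_lin 5)))

lemma r3_lin : IsLinearMap ℤ r3 :=
  comp_lin (w_lin 7) (comp_lin (w_lin 6) (comp_lin (w_lin 0) (w_lin 7)))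

lemma phis_lin : IsLinearMap ℤ phis := by
  unfold phis
  exact comp_lin (w_lin 2) (comp_lin (w_lin 3) (comp_lin (w_lin 8) (comp_lin (w_lin 4) (comp_lin (w_lin 3) (comp_lin (w_lin 2) (comp_lin (w_lin 1) (comp_lin (w_lin 2) (comp_lin (w_lin 3) (comp_lin (w_lin 4) (comp_lin (w_lin 5) (comp_lin (w_lin 6) (comp_lin (w_lin 7) (comp_lin (w_lin 0) (comp_lin (w_lin 8) (comp_lin (w_lin 3) (comp_lin (w_lin 4) (comp_lin (w_lin 5) (comp_lin (w_lin 6) (comp_lin (w_lin 7) (comp_lin (w_lin 0) (comp_lin (w_lin 2) (comp_lin (w_lin 3) (comp_lin (w_lin 4) (comp_lin (w_lin 5) (comp_lin (w_lin 6) (comp_lin (w_lin 8) (comp_lin (w_lin 3) (comp_lin (w_lin 4) (comp_lin (w_lin 5) (w_lin 6))))))))))))))))))))))))))))))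

lemma rhs_lin : IsLinearMap ℤ (w 2 ∘ r1 ∘ w 2 ∘ w 1 ∘ w 2 ∘ r1 ∘ w 2 ∘ r2 ∘ r3 ∘ r1 ∘ r2 ∘
      w 0 ∘ w 6) :=
  comp_lin (w_lin 2) (comp_lin (r1_lin) (comp_lin (w_lin 2) (comp_lin (w_lin 1) (comp_lin (w_lin 2) (comp_lin (r1_lin) (comp_lin (w_lin 2) (comp_lin (r2_lin) (comp_lin (r3_lin) (comp_lin (r1_lin) (comp_lin (r2_lin) (comp_lin (w_lin 0) (w_lin 6))))))))))))

lemma ext_basis {f g : Pic → Pic} (hf : IsLinearMap ℤ f) (hg : IsLinearMap ℤ g)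
    (h : ∀ j : Fin 10, f (Pi.single j 1) = g (Pi.single j 1)) : f = g := by
  have := LinearMap.pi_ext' (f := IsLinearMap.mk' f hf) (g := IsLinearMap.mk' g hg) ?_
  · funext v; exact congrFun (congrArg DFunLike.coe this) v
  · intro i
    apply LinearMap.ext_ring
    simpa using h i

/-- `φ_s = w_2 r_1 w_2 w_1 w_2 r_1 w_2 r_2 r_3 r_1 r_2 w_0 w_6` as linear maps
on the Picard lattice. -/
theorem statement_15 :
    phis = w 2 ∘ r1 ∘ w 2 ∘ w 1 ∘ w 2 ∘ r1 ∘ w 2 ∘ r2 ∘ r3 ∘ r1 ∘ r2 ∘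
      w 0 ∘ w 6 := by
  apply ext_basis phis_lin rhs_lin
  decide
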